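/- For every s > 1 there exists c > 0 such that for all ξ ∈ ℝ the larger eigenvalue Λ_sp(ξ) of S(ξ) = M(ξ)⁻¹ R^s(ξ) satisfies Λ_sp(ξ) ≥ c. In fact one may take c = 12(s − 1)/7, since the sum of the two eigenvalues is at least 4(s−1) and the smaller eigenvalue Λ_ph(ξ) is at most 18. -/

import Mathlib

open Real Complex Matrix Filter Topology

/-- Fourier symbol of the SIPG mass matrix (mesh size h = 1). -/
noncomputable def Msym (ξ : ℝ) : Matrix (Fin 2) (Fin 2) ℂ :=
  !![(((2 + Real.cos ξ) / 3 : ℝ) : ℂ), Complex.I * (Real.sin ξ : ℂ) / 6;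
     -Complex.I * (Real.sin ξ : ℂ) / 6, (((2 - Real.cos ξ) / 12 : ℝ) : ℂ)]

/-- Fourier symbol of the SIPG stiffness matrix with penalty parameter s (mesh size h = 1). -/
noncomputable def Rsym (s ξ : ℝ) : Matrix (Fin 2) (Fin 2) ℂ :=
  !![((4 * Real.sin (ξ / 2) ^ 2 : ℝ) : ℂ), 0;
     0, ((s - Real.cos (ξ / 2) ^ 2 : ℝ) : ℂ)]

/-- The matrix S(ξ) = M(ξ)⁻¹ R^s(ξ). -/
noncomputable def Ssym (s ξ : ℝ) : Matrix (Fin 2) (Fin 2) ℂ := (Msym ξ)⁻¹ * Rsym s ξ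

/-- Λ is an eigenvalue of the 2×2 complex matrix S. -/
def IsEigOf (S : Matrix (Fin 2) (Fin 2) ℂ) (Λ : ℂ) : Prop :=
  ∃ v : Fin 2 → ℂ, v ≠ 0 ∧ S.mulVec v = Λ • v

/-- The coefficient B(ξ) of the characteristic quadratic Λ²/12 − B Λ + C = 0. -/
noncomputable def Bcoef (s ξ : ℝ) : ℝ :=
  4 * Real.sin (ξ / 2) ^ 2 * (2 - Real.cos ξ) / 12 +
    (s - Real.cos (ξ / 2) ^ 2) * (2 + Real.cos ξ) / 3

/-- The coefficient C(ξ) of the characteristic quadratic Λ²/12 − B Λ + C = 0. -/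
noncomputable def Ccoef (s ξ : ℝ) : ℝ :=
  4 * Real.sin (ξ / 2) ^ 2 * (s - Real.cos (ξ / 2) ^ 2)

/-! Write `x = cos² (ξ / 2)`. The characteristic quadratic `Λ² / 12 - B Λ + C` of `S(ξ)` has
discriminant `(P - Q)² + 16 x (1 - x)² (s - x) / 9 ≥ 0`, where `B = P + Q` with
`P = (1 - x) (3 - 2 x) / 3` and `Q = (s - x) (1 + 2 x) / 3`. Hence its larger root `6 B + 6 √(B² - C / 3)` is a real eigenvalue of `S(ξ)`,
and it is at least `6 B ≥ 2 (s - 1) ≥ 12 (s - 1) / 7`. -/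

theorem exists_mulVec_nonsing_inv_mul_eq_smul_of_det_sub_smul_eq_zero
    {n K : Type*} [Fintype n] [DecidableEq n] [Field K] {M R : Matrix n n K}
    (hM : IsUnit M.det) {μ : K} (h : (R - μ • M).det = 0) :
    ∃ v ≠ 0, (M⁻¹ * R) *ᵥ v = μ • v := by
  obtain ⟨v, hv0, hv⟩ := Matrix.exists_mulVec_eq_zero_iff.mpr h
  refine ⟨v, hv0, ?_⟩
  rw [sub_mulVec, smul_mulVec, sub_eq_zero] at hv
  rw [← mulVec_mulVec, hv, mulVec_smul, mulVec_mulVec, nonsing_inv_mul _ hM, one_mulVec]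

theorem exists_quadratic_eq_zero_ge {a b c : ℝ} (ha : 0 < a) (hd : 0 ≤ discrim a b c) :
    ∃ x, a * (x * x) + b * x + c = 0 ∧ -b / (2 * a) ≤ x := by
  have hsq : discrim a b c = √(discrim a b c) * √(discrim a b c) := (Real.mul_self_sqrt hd).symm
  refine ⟨(-b + √(discrim a b c)) / (2 * a),
    (quadratic_eq_zero_iff ha.ne' hsq _).mpr (.inl rfl), ?_⟩
  gcongr
  exact le_add_of_nonneg_right (Real.sqrt_nonneg _)

lemma Bcoef_eq_cos_sq (s ξ : ℝ) :
    Bcoef s ξ = (1 - Real.cos (ξ / 2) ^ 2) * (3 - 2 * Real.cos (ξ / 2) ^ 2) / 3 +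
      (s - Real.cos (ξ / 2) ^ 2) * (1 + 2 * Real.cos (ξ / 2) ^ 2) / 3 := by
  have hcos : Real.cos ξ = 2 * Real.cos (ξ / 2) ^ 2 - 1 := by
    rw [Real.cos_sq, mul_div_cancel₀ ξ two_ne_zero]
    ring
  rw [Bcoef, Real.sin_sq, hcos]
  ring

lemma Ccoef_eq_cos_sq (s ξ : ℝ) :
    Ccoef s ξ = 4 * (1 - Real.cos (ξ / 2) ^ 2) * (s - Real.cos (ξ / 2) ^ 2) := by
  rw [Ccoef, Real.sin_sq]

lemma discrim_Bcoef_Ccoef_nonneg {s : ℝ} (ξ : ℝ) (hs : 1 ≤ s) :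
    0 ≤ discrim (1 / 12) (-Bcoef s ξ) (Ccoef s ξ) := by
  set x := Real.cos (ξ / 2) ^ 2
  have hx1 : x ≤ 1 := Real.cos_sq_le_one _
  have hx0 : 0 ≤ x := sq_nonneg _
  have key : discrim (1 / 12) (-Bcoef s ξ) (Ccoef s ξ) =
      ((1 - x) * (3 - 2 * x) / 3 - (s - x) * (1 + 2 * x) / 3) ^ 2 +
        16 * x * (1 - x) ^ 2 * (s - x) / 9 := by
    rw [discrim, Bcoef_eq_cos_sq, Ccoef_eq_cos_sq]
    ring
  rw [key]
  have : 0 ≤ s - x := by linarith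
  positivity

lemma two_mul_sub_one_le_six_mul_Bcoef {s : ℝ} (ξ : ℝ) (hs : 1 ≤ s) :
    2 * (s - 1) ≤ 6 * Bcoef s ξ := by
  have hx1 : Real.cos (ξ / 2) ^ 2 ≤ 1 := Real.cos_sq_le_one _
  rw [Bcoef_eq_cos_sq]
  nlinarith [sq_nonneg (Real.cos (ξ / 2))]

lemma det_Msym (ξ : ℝ) : (Msym ξ).det = 1 / 12 := by
  have h : (Real.sin ξ : ℂ) ^ 2 + (Real.cos ξ : ℂ) ^ 2 = 1 := by
    exact_mod_cast Real.sin_sq_add_cos_sq ξ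
  simp only [Msym, det_fin_two_of]
  push_cast [-ofReal_cos, -ofReal_sin]
  linear_combination (-1 / 36 : ℂ) * h + (Real.sin ξ : ℂ) ^ 2 / 36 * I_sq

lemma det_Rsym_sub_smul_Msym (s ξ μ : ℝ) :
    (Rsym s ξ - (μ : ℂ) • Msym ξ).det = ((μ ^ 2 / 12 - Bcoef s ξ * μ + Ccoef s ξ : ℝ) : ℂ) := by
  have h : (Real.sin ξ : ℂ) ^ 2 + (Real.cos ξ : ℂ) ^ 2 = 1 := by
    exact_mod_cast Real.sin_sq_add_cos_sq ξ
  simp only [det_fin_two, Rsym, Msym, Bcoef, Ccoef, Matrix.sub_apply, Matrix.smul_apply,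
    of_apply, cons_val', cons_val_zero, cons_val_one, empty_val', cons_val_fin_one,
    smul_eq_mul]
  push_cast [-ofReal_cos, -ofReal_sin]
  linear_combination (-(μ : ℂ) ^ 2 / 36) * h + ((μ : ℂ) ^ 2 * (Real.sin ξ : ℂ) ^ 2 / 36) * I_sq

lemma isEigOf_Ssym_of_charpoly_eq_zero {s ξ μ : ℝ}
    (hμ : μ ^ 2 / 12 - Bcoef s ξ * μ + Ccoef s ξ = 0) :
    IsEigOf (Ssym s ξ) μ :=
  exists_mulVec_nonsing_inv_mul_eq_smul_of_det_sub_smul_eq_zero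
    (by rw [det_Msym]; norm_num) (by rw [det_Rsym_sub_smul_Msym, hμ, ofReal_zero])

lemma exists_isEigOf_Ssym_ge {s : ℝ} (ξ : ℝ) (hs : 1 ≤ s) :
    ∃ μ : ℝ, IsEigOf (Ssym s ξ) μ ∧ 2 * (s - 1) ≤ μ := by
  obtain ⟨μ, hroot, hge⟩ :=
    exists_quadratic_eq_zero_ge (by norm_num) (discrim_Bcoef_Ccoef_nonneg ξ hs)
  refine ⟨μ, isEigOf_Ssym_of_charpoly_eq_zero (by linear_combination hroot), ?_⟩
  have := two_mul_sub_one_le_six_mul_Bcoef ξ hs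
  have h6 : -(-Bcoef s ξ) / (2 * (1 / 12)) = 6 * Bcoef s ξ := by ring
  linarith

theorem Ssym_spurious_eigenvalue_lower_bound (s : ℝ) (hs : 1 < s) :
    0 < 12 * (s - 1) / 7 ∧
    ∀ ξ : ℝ, ∀ Λsp : ℝ,
      (IsEigOf (Ssym s ξ) ((Λsp : ℝ) : ℂ) ∧
        ∀ μ : ℝ, IsEigOf (Ssym s ξ) (μ : ℂ) → μ ≤ Λsp) →
      12 * (s - 1) / 7 ≤ Λsp := by
  refine ⟨by linarith, fun ξ Λsp ⟨_, hmax⟩ => ?_⟩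
  obtain ⟨μ, hμ, hge⟩ := exists_isEigOf_Ssym_ge ξ hs.le
  linarith [hmax μ hμ]
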